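/- Uniqueness of dilation class: a linear system (φ, A, V) has exactly one equivalence class of linearly minimal homomorphism dilations if and only if M = {0}, where M = { Σᵢ cᵢ aᵢ⊗xᵢ ∈ A⊗V : Σᵢ cᵢ φ(a aᵢ)xᵢ = 0 for all a ∈ A }. (In particular, when M = {0} every linearly minimal dilation is equivalent to the universal dilation.) -/

import Mathlib

/-!
Every dilation `(π, T, S)` of `φ` is the image of the universal one under
`Φ : a ⊗ x ↦ π(a) T(x)`: `Φ` intertwines `π_u` with `π`, `Φ ∘ T_u = T` and `S ∘ Φ = S_u`.
Minimality says `Φ` is onto, and `ker Φ ⊆ M` because `S π(a) Φ = S_u π_u(a)`; so if `M = 0`,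
`Φ` is an equivalence with the universal dilation.
Conversely `M` is `π_u`-invariant and lies in `ker S_u`, so `(A ⊗ V) / M` carries a linearly
minimal dilation (`T` is injective and `S` onto since `S T = φ(1) = 1`) whose `Φ` is the
quotient map. An equivalence `R` of it with the universal dilation satisfies `R ∘ Φ = id`, so the
quotient map is injective and `M = 0`.
-/

open scoped TensorProduct

variable (k : Type*) [Field k] (A : Type*) [Ring A] [Algebra k A]
  (V : Type*) [AddCommGroup V] [Module k V]

/-- The universal homomorphism `π_u(a)(b ⊗ x) = (ab) ⊗ x` on `A ⊗ V`. -/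
noncomputable def piU : A →ₐ[k] Module.End k (A ⊗[k] V) where
  toFun a := LinearMap.rTensor V (LinearMap.mulLeft k a)
  map_one' := by ext b v; simp
  map_mul' a b := by ext c v; simp [mul_assoc]
  map_zero' := by ext a v; simp
  map_add' a b := by ext c v; simp [add_mul, TensorProduct.add_tmul]
  commutes' c := by
    ext a v
    simp [Algebra.algebraMap_eq_smul_one, smul_mul_assoc, TensorProduct.smul_tmul']

/-- The universal analysis operator `T(x) = 1 ⊗ x`. -/
noncomputable def Tu : V →ₗ[k] A ⊗[k] V := TensorProduct.mk k A V 1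

/-- The universal synthesis operator `S(a ⊗ x) = φ(a) x`. -/
noncomputable def Su (φ : A →ₗ[k] Module.End k V) : A ⊗[k] V →ₗ[k] V :=
  TensorProduct.lift (φ : A →ₗ[k] V →ₗ[k] V)

section

variable {k A V}

@[simp]
lemma piU_tmul (a b : A) (x : V) : piU k A V a (b ⊗ₜ[k] x) = (a * b) ⊗ₜ[k] x := rfl

@[simp]
lemma Su_tmul (φ : A →ₗ[k] Module.End k V) (a : A) (x : V) : Su k A V φ (a ⊗ₜ[k] x) = φ a x :=
  rfl

lemma Tu_apply (x : V) : Tu k A V x = (1 : A) ⊗ₜ[k] x := rfl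

lemma Su_Tu {φ : A →ₗ[k] Module.End k V} (hφ : φ 1 = 1) (x : V) : Su k A V φ (Tu k A V x) = x := by
  simp [Tu_apply, hφ]

/-- The space `M` of the paper. -/
noncomputable def nullSpace (φ : A →ₗ[k] Module.End k V) : Submodule k (A ⊗[k] V) :=
  ⨅ a : A, LinearMap.ker ((Su k A V φ) ∘ₗ (piU k A V a : A ⊗[k] V →ₗ[k] A ⊗[k] V))

variable {φ : A →ₗ[k] Module.End k V}

lemma mem_nullSpace {u : A ⊗[k] V} :
    u ∈ nullSpace φ ↔ ∀ a : A, Su k A V φ (piU k A V a u) = 0 := by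
  simp [nullSpace, Submodule.mem_iInf]

lemma nullSpace_le_comap_piU (b : A) : nullSpace φ ≤ (nullSpace φ).comap (piU k A V b) := by
  intro u hu
  rw [Submodule.mem_comap, mem_nullSpace]
  intro a
  simpa [← Module.End.mul_apply] using mem_nullSpace.1 hu (a * b)

lemma nullSpace_le_ker_Su : nullSpace φ ≤ LinearMap.ker (Su k A V φ) := fun u hu => by
  simpa using mem_nullSpace.1 hu 1

section dilationMap

variable {W W' : Type*} [AddCommGroup W] [Module k W] [AddCommGroup W'] [Module k W']
  (π : A →ₐ[k] Module.End k W) (T : V →ₗ[k] W)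

noncomputable def dilationMap : A ⊗[k] V →ₗ[k] W :=
  TensorProduct.lift ((LinearMap.lcomp k W T) ∘ₗ π.toLinearMap)

@[simp]
lemma dilationMap_tmul (a : A) (x : V) : dilationMap π T (a ⊗ₜ[k] x) = π a (T x) := rfl

lemma dilationMap_Tu (x : V) : dilationMap π T (Tu k A V x) = T x := by
  simp [Tu_apply]

lemma dilationMap_piU (a : A) (u : A ⊗[k] V) :
    dilationMap π T (piU k A V a u) = π a (dilationMap π T u) := by
  induction u using TensorProduct.induction_on with
  | zero => simp
  | tmul b x => simp
  | add u v hu hv => simp only [map_add, hu, hv]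

lemma range_dilationMap :
    LinearMap.range (dilationMap π T) =
      Submodule.span k {w | ∃ (a : A) (x : V), w = π a (T x)} := by
  simp only [← Submodule.map_top, ← TensorProduct.span_tmul_eq_top, Submodule.map_span]
  congr
  ext w
  simp [eq_comm]

lemma dilationMap_comp {π' : A →ₐ[k] Module.End k W'} (f : W →ₗ[k] W')
    (hf : ∀ a w, f (π a w) = π' a (f w)) : dilationMap π' (f ∘ₗ T) = f ∘ₗ dilationMap π T :=
  TensorProduct.ext' fun a x => (hf a (T x)).symm

lemma dilationMap_piU_Tu : dilationMap (piU k A V) (Tu k A V) = LinearMap.id :=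
  TensorProduct.ext' fun a x => by simp [Tu_apply]

lemma comp_dilationMap_eq_Su_iff (S : W →ₗ[k] V) :
    S ∘ₗ dilationMap π T = Su k A V φ ↔ ∀ a : A, φ a = S ∘ₗ (π a : W →ₗ[k] W) ∘ₗ T := by
  constructor
  · intro h a
    ext x
    simpa using (LinearMap.congr_fun h (a ⊗ₜ[k] x)).symm
  · intro h
    exact TensorProduct.ext' fun a x => by simp [h a]

lemma ker_dilationMap_le_nullSpace {S : W →ₗ[k] V}
    (hdil : ∀ a : A, φ a = S ∘ₗ (π a : W →ₗ[k] W) ∘ₗ T) :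
    LinearMap.ker (dilationMap π T) ≤ nullSpace φ := by
  intro u hu
  rw [mem_nullSpace]
  intro a
  rw [← (comp_dilationMap_eq_Su_iff π T S).2 hdil, LinearMap.comp_apply, dilationMap_piU,
    LinearMap.mem_ker.1 hu, map_zero, map_zero]

end dilationMap

lemma exists_linearEquiv_of_nullSpace_eq_bot (hM : nullSpace φ = ⊥) {W : Type*} [AddCommGroup W]
    [Module k W] {π : A →ₐ[k] Module.End k W} {T : V →ₗ[k] W} {S : W →ₗ[k] V}
    (hdil : ∀ a : A, φ a = S ∘ₗ (π a : W →ₗ[k] W) ∘ₗ T)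
    (hspan : Submodule.span k {w : W | ∃ (a : A) (x : V), w = π a (T x)} = ⊤) :
    ∃ R : W ≃ₗ[k] A ⊗[k] V, (∀ x : V, R (T x) = Tu k A V x) ∧
      (∀ w : W, Su k A V φ (R w) = S w) ∧ ∀ (a : A) (w : W), R (π a w) = piU k A V a (R w) := by
  have hinj : Function.Injective (dilationMap π T) := by
    rw [← LinearMap.ker_eq_bot, eq_bot_iff, ← hM]
    exact ker_dilationMap_le_nullSpace π T hdil
  have hsurj : Function.Surjective (dilationMap π T) := by
    rw [← LinearMap.range_eq_top, range_dilationMap, hspan]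
  let e := LinearEquiv.ofBijective (dilationMap π T) ⟨hinj, hsurj⟩
  have hSu := (comp_dilationMap_eq_Su_iff π T S).2 hdil
  refine ⟨e.symm, fun x => ?_, fun w => ?_, fun a w => ?_⟩
  · rw [e.symm_apply_eq]
    exact (dilationMap_Tu π T x).symm
  · obtain ⟨u, rfl⟩ := e.surjective w
    rw [e.symm_apply_apply, ← hSu]
    rfl
  · obtain ⟨u, rfl⟩ := e.surjective w
    rw [e.symm_apply_apply, e.symm_apply_eq]
    exact (dilationMap_piU π T a u).symm

section quotient

variable {W : Type*} [AddCommGroup W] [Module k W]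

noncomputable def quotientAlgHom (π : A →ₐ[k] Module.End k W) (N : Submodule k W)
    (hN : ∀ a, N ≤ N.comap (π a)) : A →ₐ[k] Module.End k (W ⧸ N) where
  toFun a := N.mapQ N (π a) (hN a)
  map_one' := Submodule.linearMap_qext _ (by ext; simp)
  map_mul' a b := Submodule.linearMap_qext _ (by ext; simp)
  map_zero' := Submodule.linearMap_qext _ (by ext; simp)
  map_add' a b := Submodule.linearMap_qext _ (by ext; simp)
  commutes' c := Submodule.linearMap_qext _ (by ext; simp)

@[simp]
lemma quotientAlgHom_mk (π : A →ₐ[k] Module.End k W) (N : Submodule k W)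
    (hN : ∀ a, N ≤ N.comap (π a)) (a : A) (w : W) :
    quotientAlgHom π N hN a (Submodule.Quotient.mk w) = Submodule.Quotient.mk (π a w) := rfl

variable (e : W ≃ₗ[k] A ⊗[k] V ⧸ nullSpace φ)

noncomputable def quotientRep : A →ₐ[k] Module.End k W :=
  (e.symm.conjAlgEquiv k).toAlgHom.comp
    (quotientAlgHom (piU k A V) (nullSpace φ) nullSpace_le_comap_piU)

noncomputable def quotientT : V →ₗ[k] W := e.symm.toLinearMap ∘ₗ (nullSpace φ).mkQ ∘ₗ Tu k A V

noncomputable def quotientS : W →ₗ[k] V :=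
  (nullSpace φ).liftQ (Su k A V φ) nullSpace_le_ker_Su ∘ₗ e.toLinearMap

lemma dilationMap_quotient :
    dilationMap (quotientRep e) (quotientT e) = e.symm.toLinearMap ∘ₗ (nullSpace φ).mkQ := by
  rw [quotientT, ← LinearMap.comp_assoc, dilationMap_comp (piU k A V), dilationMap_piU_Tu,
    LinearMap.comp_id]
  intro a u
  simp [quotientRep, LinearEquiv.conjAlgEquiv_apply]

lemma quotientS_quotientT (hφ : φ 1 = 1) (x : V) : quotientS e (quotientT e x) = x := by
  simp [quotientS, quotientT, Su_Tu hφ]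

lemma quotient_dilates :
    ∀ a : A, φ a = quotientS e ∘ₗ (quotientRep e a : W →ₗ[k] W) ∘ₗ quotientT e := by
  rw [← comp_dilationMap_eq_Su_iff, dilationMap_quotient, quotientS]
  ext u
  simp

lemma span_quotient_eq_top :
    Submodule.span k {w : W | ∃ (a : A) (x : V), w = quotientRep e a (quotientT e x)} = ⊤ := by
  rw [← range_dilationMap, dilationMap_quotient, LinearMap.range_comp, Submodule.range_mkQ,
    Submodule.map_top, LinearEquiv.range]

lemma nullSpace_eq_bot_of_linearEquiv_quotient (R : W ≃ₗ[k] A ⊗[k] V)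
    (hRT : ∀ x : V, R (quotientT e x) = Tu k A V x)
    (hRπ : ∀ (a : A) (w : W), R (quotientRep e a w) = piU k A V a (R w)) :
    nullSpace φ = ⊥ := by
  have hid : R.toLinearMap ∘ₗ e.symm.toLinearMap ∘ₗ (nullSpace φ).mkQ = LinearMap.id := by
    rw [← dilationMap_quotient, ← dilationMap_comp _ _ R.toLinearMap hRπ, ← dilationMap_piU_Tu]
    congr 1
    exact LinearMap.ext hRT
  rw [← Submodule.ker_mkQ (nullSpace φ), LinearMap.ker_eq_bot]
  exact Function.LeftInverse.injective (g := R ∘ e.symm) (LinearMap.congr_fun hid)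

end quotient

end

theorem unique_dilation_class_iff (φ : A →ₗ[k] Module.End k V) (hφ : φ 1 = 1) :
    (∀ (W₁ : Type (max u_1 u_2 u_3)) [AddCommGroup W₁] [Module k W₁],
      ∀ (π₁ : A →ₐ[k] Module.End k W₁) (T₁ : V →ₗ[k] W₁) (S₁ : W₁ →ₗ[k] V),
        Function.Injective T₁ → Function.Surjective S₁ →
        (∀ a : A, (φ a : V →ₗ[k] V) = S₁ ∘ₗ (π₁ a : W₁ →ₗ[k] W₁) ∘ₗ T₁) →
        Submodule.span k {w : W₁ | ∃ (a : A) (x : V), w = π₁ a (T₁ x)} = ⊤ →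
        ∃ R : W₁ ≃ₗ[k] A ⊗[k] V,
          (∀ x : V, R (T₁ x) = Tu k A V x) ∧
          (∀ w : W₁, Su k A V φ (R w) = S₁ w) ∧
          ∀ (a : A) (w : W₁), R (π₁ a w) = piU k A V a (R w)) ↔
      (⨅ a : A, LinearMap.ker ((Su k A V φ) ∘ₗ (piU k A V a : A ⊗[k] V →ₗ[k] A ⊗[k] V))) = ⊥ := by
  constructor
  · intro H
    -- `ULift` moves `(A ⊗ V) / M` into the universe of the dilations quantified over in `H`
    let e : ULift.{u_1} (A ⊗[k] V ⧸ nullSpace φ) ≃ₗ[k] A ⊗[k] V ⧸ nullSpace φ :=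
      ULift.moduleEquiv
    have hST : Function.LeftInverse (quotientS e) (quotientT e) := quotientS_quotientT e hφ
    obtain ⟨R, hRT, -, hRπ⟩ := H _ (quotientRep e) (quotientT e) (quotientS e) hST.injective
      hST.surjective (quotient_dilates e) (span_quotient_eq_top e)
    exact nullSpace_eq_bot_of_linearEquiv_quotient e R hRT hRπ
  · rintro hM W _ _ π T S - - hdil hspan
    exact exists_linearEquiv_of_nullSpace_eq_bot hM hdil hspan
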